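/- Every quaternionic linear map t : ℍ^m → ℍ^n (with respect to the natural linear quaternionic structures given by left ℍ-module multiplication) is of the form t(X) = a · X · A for some quaternion a ∈ ℍ and some m × n matrix A with quaternionic entries, where X ∈ ℍ^m is viewed as a row vector. -/

import Mathlib

/-!
Write `α = T i`, `β = T j`. These are unit imaginary quaternions, so `α² = β² = -1`, and if
`t ≠ 0` then comparing `t ((j * i) • X)` with `t (-(i * j) • X)` gives `βα = -αβ`. Hence
`i ↦ α, j ↦ β` extends to an automorphism of `ℍ`, which is inner: averaging `x ↦ φ(g) x g⁻¹`
over `g ∈ {1, i, j, k}` produces a nonzero `a` with `a i = α a` and `a j = β a`. Then `a⁻¹ • t` is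
left `ℍ`-linear, and left `ℍ`-linear maps `ℍ^m → ℍ^n` are right multiplications by matrices.
-/

open Quaternion

theorem inv_smul_smul_eq_smul_inv_smul {D W : Type*} [DivisionRing D] [MulAction D W]
    {a e γ : D} (ha : a ≠ 0) (hae : a * e = γ * a) (w : W) : a⁻¹ • γ • w = e • a⁻¹ • w := by
  have : a⁻¹ * γ = e * a⁻¹ := by
    rw [eq_mul_inv_iff_mul_eq₀ ha, mul_assoc, ← hae, ← mul_assoc, inv_mul_cancel₀ ha, one_mul]
  rw [smul_smul, this, mul_smul]

namespace Quaternion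

@[simps] noncomputable def i : ℍ := ⟨0, 1, 0, 0⟩
@[simps] noncomputable def j : ℍ := ⟨0, 0, 1, 0⟩
@[simps] noncomputable def k : ℍ := ⟨0, 0, 0, 1⟩

theorem i_mul_i : i * i = -1 := by ext <;> simp
theorem j_mul_j : j * j = -1 := by ext <;> simp
theorem i_mul_j : i * j = k := by ext <;> simp
theorem j_mul_i : j * i = -k := by ext <;> simp
theorem k_mul_i : k * i = j := by ext <;> simp
theorem k_mul_j : k * j = -i := by ext <;> simp

theorem eq_re_smul_one_add (p : ℍ) : p = p.re • 1 + p.imI • i + p.imJ • j + p.imK • k := by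
  ext <;> simp

theorem norm_eq_one_of_normSq_eq_one {q : ℍ} (h : normSq q = 1) : ‖q‖ = 1 := by
  rw [normSq_eq_norm_mul_self, mul_self_eq_one_iff] at h
  exact h.resolve_right (by linarith [norm_nonneg q])

theorem norm_i : ‖i‖ = 1 := norm_eq_one_of_normSq_eq_one (by simp [normSq_def'])
theorem norm_j : ‖j‖ = 1 := norm_eq_one_of_normSq_eq_one (by simp [normSq_def'])

theorem mul_self_eq_neg_one {q : ℍ} (hre : q.re = 0) (hq : ‖q‖ = 1) : q * q = -1 := by
  rw [← sq, sq_eq_neg_normSq.mpr hre, normSq_eq_norm_mul_self, hq, mul_one, coe_one]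

-- `∑ g ∈ {1, i, j, k}, φ g * x * g⁻¹`, where `φ` sends `i, j, k` to `α, β, αβ`.
noncomputable def intertwiner (α β x : ℍ) : ℍ := x - α * x * i - β * x * j - α * β * x * k

section Intertwiner

variable {α β : ℍ}

theorem intertwiner_mul_i (hα : α * α = -1) (x : ℍ) :
    intertwiner α β x * i = α * intertwiner α β x := by
  have hααβ : α * (α * β) = -β := by rw [← mul_assoc, hα, neg_one_mul]
  calc intertwiner α β x * i
      = x * i - α * x * (i * i) - β * x * (j * i) - α * β * x * (k * i) := by
        simp only [intertwiner]; noncomm_ring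
    _ = α * intertwiner α β x := by
        rw [i_mul_i, j_mul_i, k_mul_i, intertwiner]
        linear_combination (norm := noncomm_ring) hα * (x * i) + hααβ * (x * k)

theorem intertwiner_mul_j (hβ : β * β = -1) (hαβ : β * α = -(α * β)) (x : ℍ) :
    intertwiner α β x * j = β * intertwiner α β x := by
  have hβαβ : β * (α * β) = α := by rw [← mul_assoc, hαβ, neg_mul, mul_assoc, hβ]; noncomm_ring
  calc intertwiner α β x * j
      = x * j - α * x * (i * j) - β * x * (j * j) - α * β * x * (k * j) := by
        simp only [intertwiner]; noncomm_ring
    _ = β * intertwiner α β x := by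
        rw [i_mul_j, j_mul_j, k_mul_j, intertwiner]
        linear_combination (norm := noncomm_ring) hβ * (x * j) + hαβ * (x * i) + hβαβ * (x * k)

-- The trace of `intertwiner α β` as an `ℝ`-linear map: the three twisted terms are traceless.
theorem intertwiner_trace (α β : ℍ) :
    (intertwiner α β 1).re + (intertwiner α β i).imI + (intertwiner α β j).imJ
      + (intertwiner α β k).imK = 4 := by
  simp only [intertwiner, mul_one, re_sub, re_one, re_mul, re_i, mul_zero, imI_i, zero_sub,
    imJ_i, sub_zero, imK_i, sub_neg_eq_add, re_j, imI_j, sub_self, imJ_j, imK_j, re_k, imI_mul,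
    imI_k, imJ_mul, imJ_k, imK_mul, imK_k, neg_add_rev, neg_sub, imI_sub, add_zero, zero_add,
    imJ_sub, neg_neg, imK_sub]
  ring

theorem exists_ne_zero_intertwining (hα : α * α = -1) (hβ : β * β = -1)
    (hαβ : β * α = -(α * β)) : ∃ a ≠ 0, a * i = α * a ∧ a * j = β * a := by
  obtain ⟨x, hx⟩ : ∃ x, intertwiner α β x ≠ 0 := by
    by_contra! h
    simpa [h] using intertwiner_trace α β
  exact ⟨_, hx, intertwiner_mul_i hα x, intertwiner_mul_j hβ hαβ x⟩

end Intertwiner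

variable {V W : Type*} [AddCommGroup V] [Module ℍ V] [Module ℝ V]
  [AddCommGroup W] [Module ℍ W] [Module ℝ W] {t : V →ₗ[ℝ] W} {α β : ℍ}

theorem anticomm_of_map_smul (hi : ∀ v, t (i • v) = α • t v) (hj : ∀ v, t (j • v) = β • t v)
    {v : V} (hv : t v ≠ 0) : β * α = -(α * β) := by
  apply smul_left_injective ℍ hv
  calc (β * α) • t v = t ((j * i) • v) := by rw [mul_smul j i, hj, hi, smul_smul]
    _ = (-(α * β)) • t v := by
      rw [j_mul_i, ← i_mul_j, neg_smul, map_neg, mul_smul i j, hi, hj, smul_smul, neg_smul]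

variable [IsScalarTower ℝ ℍ V] [IsScalarTower ℝ ℍ W]

theorem inv_smul_map_smul {a : ℍ} (ha : a ≠ 0) (hai : a * i = α * a) (haj : a * j = β * a)
    (hi : ∀ v, t (i • v) = α • t v) (hj : ∀ v, t (j • v) = β • t v) (p : ℍ) (v : V) :
    a⁻¹ • t (p • v) = p • a⁻¹ • t v := by
  have hak : a * k = (α * β) * a := by
    rw [← i_mul_j, ← mul_assoc, hai, mul_assoc, haj, mul_assoc]
  have hk : t (k • v) = (α * β) • t v := by rw [← i_mul_j, mul_smul, hi, hj, smul_smul]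
  rw [eq_re_smul_one_add p]
  simp only [add_smul, smul_assoc, one_smul, map_add, LinearMap.map_smul, smul_add,
    smul_comm a⁻¹ (_ : ℝ), hi, hj, hk, inv_smul_smul_eq_smul_inv_smul ha hai,
    inv_smul_smul_eq_smul_inv_smul ha haj, inv_smul_smul_eq_smul_inv_smul ha hak]

theorem exists_smul_linearMap (hα : α * α = -1) (hβ : β * β = -1)
    (hi : ∀ v, t (i • v) = α • t v) (hj : ∀ v, t (j • v) = β • t v) :
    ∃ (a : ℍ) (s : V →ₗ[ℍ] W), ∀ v, t v = a • s v := by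
  rcases eq_or_ne t 0 with rfl | ht
  · exact ⟨0, 0, fun v => by simp⟩
  obtain ⟨v, hv⟩ := DFunLike.ne_iff.mp ht
  obtain ⟨a, ha, hai, haj⟩ :=
    exists_ne_zero_intertwining hα hβ (anticomm_of_map_smul hi hj hv)
  let s : V →ₗ[ℍ] W :=
    { toFun := fun v => a⁻¹ • t v
      map_add' := fun v w => by rw [map_add, smul_add]
      map_smul' := inv_smul_map_smul ha hai haj hi hj }
  exact ⟨a, s, fun v => (smul_inv_smul₀ ha (t v)).symm⟩

end Quaternion

/-- Every quaternionic linear map `t : ℍ^m → ℍ^n` (with respect to the natural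
linear quaternionic structures coming from left `ℍ`-multiplication) is of the
form `t(X) = a • (X ⬝ A)` for a quaternion `a` and a quaternionic `m × n`
matrix `A`. -/
theorem stmt5 {m n : ℕ}
    (t : (Fin m → Quaternion ℝ) →ₗ[ℝ] (Fin n → Quaternion ℝ))
    (T : Quaternion ℝ → Quaternion ℝ)
    (hT : ∀ q : Quaternion ℝ, q.re = 0 → ‖q‖ = 1 → (T q).re = 0 ∧ ‖T q‖ = 1)
    (hq : ∀ q : Quaternion ℝ, q.re = 0 → ‖q‖ = 1 →
      ∀ X : Fin m → Quaternion ℝ, t (q • X) = T q • t X) :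
    ∃ (a : Quaternion ℝ) (A : Matrix (Fin m) (Fin n) (Quaternion ℝ)),
      ∀ X : Fin m → Quaternion ℝ, t X = a • Matrix.vecMul X A := by
  obtain ⟨hαre, hα⟩ := hT i re_i norm_i
  obtain ⟨hβre, hβ⟩ := hT j re_j norm_j
  obtain ⟨a, s, hs⟩ := exists_smul_linearMap (mul_self_eq_neg_one hαre hα)
    (mul_self_eq_neg_one hβre hβ) (hq i re_i norm_i) (hq j re_j norm_j)
  refine ⟨a, LinearMap.toMatrixRight' s, fun X => ?_⟩
  rw [hs, ← Matrix.toLinearMapRight'_apply, LinearMap.toMatrixRight'.symm_apply_apply]
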